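/- For fixed H ∈ ℝ and fixed ρ ∈ ℝ, the function m ↦ J_{H,ρ,m}(t) is pointwise monotone nondecreasing in m ∈ (0,∞]: if 0 < m₁ ≤ m₂ ≤ ∞ then J_{H,ρ,m₁}(t) ≤ J_{H,ρ,m₂}(t) for all t ∈ ℝ, where J_{H,ρ,∞}(t) := exp(Ht − (ρ/2)t²). -/

import Mathlib

open scoped Classical

noncomputable def sdel (δ t : ℝ) : ℝ :=
  if 0 < δ then Real.sin (Real.sqrt δ * t) / Real.sqrt δ
  else if δ = 0 then t
  else Real.sinh (Real.sqrt (-δ) * t) / Real.sqrt (-δ)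

noncomputable def cdel (δ t : ℝ) : ℝ :=
  if 0 < δ then Real.cos (Real.sqrt δ * t)
  else if δ = 0 then 1
  else Real.cosh (Real.sqrt (-δ) * t)

/-- Truncation `f₊` of `f` between its first nonpositive and first positive roots. -/
noncomputable def truncPos (f : ℝ → ℝ) (t : ℝ) : ℝ :=
  if ∃ s ∈ Set.Ioo (min t 0) (max t 0), f s = 0 then 0 else f t

/-- The model Jacobian `J_{H,ρ,m}` for `m ∈ (0,∞)`. -/
noncomputable def Jfun (H ρ m : ℝ) (t : ℝ) : ℝ :=
  (truncPos (fun s => cdel (ρ / m) s + (H / m) * sdel (ρ / m) s) t) ^ m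

/-!
`u_m = c_δ + (H/m) s_δ` (with `δ = ρ/m`) solves `u'' = -(ρ/m) u`, `u(0) = 1`, `u'(0) = H/m`,
and `J_{H,ρ,m} = u_m^m` up to the first zero of `u_m`. If `L'' + L'^2/m ≥ -ρ`, `L(0) = 0` and
`L'(0) = H`, then `exp (L/m)` is a positive supersolution of the same equation, so Sturm
comparison (monotonicity of the Wronskian) gives `u_m^m ≤ exp L` before the first zero of `u_m`.
Both `L = Ht - ρt²/2` and, for `m₁ ≤ m₂`, `L = m₂ log u_{m₂}` qualify with `m = m₁`; the second
comparison, pushed to the first zero of `u_{m₂}`, also shows that `u_{m₂}` cannot vanish before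
`u_{m₁}` does. Negative times reduce to positive ones by replacing `H` with `-H`.
-/

open Set

theorem antitoneOn_Icc_of_hasDerivAt_nonpos {f f' : ℝ → ℝ} {a b : ℝ}
    (hf : ∀ x ∈ Icc a b, HasDerivAt f (f' x) x) (hf' : ∀ x ∈ Ioo a b, f' x ≤ 0) :
    AntitoneOn f (Icc a b) :=
  antitoneOn_of_hasDerivWithinAt_nonpos (convex_Icc a b)
    (fun x hx => (hf x hx).continuousAt.continuousWithinAt)
    (fun x hx => (hf x (interior_subset hx)).hasDerivWithinAt)
    (by simpa only [interior_Icc] using hf')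

/-- The Wronskian `u' w - u w'` vanishes at `0` and is nonincreasing, hence so is `u / w`. -/
theorem sturm_comparison {u u' u'' w w' w'' q : ℝ → ℝ} {T : ℝ} (hT : 0 ≤ T)
    (hu : ∀ x ∈ Icc 0 T, HasDerivAt u (u' x) x) (hu' : ∀ x ∈ Icc 0 T, HasDerivAt u' (u'' x) x)
    (hw : ∀ x ∈ Icc 0 T, HasDerivAt w (w' x) x) (hw' : ∀ x ∈ Icc 0 T, HasDerivAt w' (w'' x) x)
    (hw_pos : ∀ x ∈ Icc 0 T, 0 < w x) (hu_nonneg : ∀ x ∈ Ioo 0 T, 0 ≤ u x)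
    (hsub : ∀ x ∈ Ioo 0 T, u'' x ≤ q x * u x) (hsuper : ∀ x ∈ Ioo 0 T, q x * w x ≤ w'' x)
    (h0 : u 0 = w 0) (h0' : u' 0 = w' 0) : u T ≤ w T := by
  have h0T : (0 : ℝ) ∈ Icc 0 T := left_mem_Icc.2 hT
  have hTT : T ∈ Icc 0 T := right_mem_Icc.2 hT
  have hW : ∀ x ∈ Icc 0 T,
      HasDerivAt (fun x => u' x * w x - u x * w' x) (u'' x * w x - u x * w'' x) x := by
    intro x hx
    exact (((hu' x hx).mul (hw x hx)).sub ((hu x hx).mul (hw' x hx))).congr_deriv (by ring)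
  have hW_anti := antitoneOn_Icc_of_hasDerivAt_nonpos hW fun x hx => by
    have hwx := hw_pos x (Ioo_subset_Icc_self hx)
    calc u'' x * w x - u x * w'' x
        ≤ q x * u x * w x - u x * (q x * w x) := by
          gcongr
          · exact hsub x hx
          · exact hu_nonneg x hx
          · exact hsuper x hx
      _ = 0 := by ring
  have hW_nonpos : ∀ x ∈ Icc 0 T, u' x * w x - u x * w' x ≤ 0 := fun x hx => by
    simpa [h0, h0', mul_comm] using hW_anti h0T hx hx.1
  have hquot : ∀ x ∈ Icc 0 T,
      HasDerivAt (fun x => u x / w x) ((u' x * w x - u x * w' x) / w x ^ 2) x :=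
    fun x hx => (hu x hx).div (hw x hx) (hw_pos x hx).ne'
  have hquot_anti := antitoneOn_Icc_of_hasDerivAt_nonpos hquot fun x hx =>
    div_nonpos_of_nonpos_of_nonneg (hW_nonpos x (Ioo_subset_Icc_self hx)) (sq_nonneg _)
  have : u T / w T ≤ u 0 / w 0 := hquot_anti h0T hTT hT
  rwa [h0, div_self (hw_pos 0 h0T).ne', div_le_one (hw_pos T hTT)] at this

theorem exists_first_zero {f : ℝ → ℝ} {t : ℝ} (hf : Continuous f) (hf0 : 0 < f 0)
    (h : ¬ ∀ x ∈ Icc 0 t, 0 < f x) :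
    ∃ T ∈ Ioc 0 t, f T = 0 ∧ ∀ x ∈ Ico 0 T, 0 < f x := by
  push Not at h
  obtain ⟨T, ⟨hT, hfT⟩, hleast⟩ :=
    (isCompact_Icc.inter_right (isClosed_Iic.preimage hf)).exists_isLeast
      (h.imp fun x hx => ⟨hx.1, hx.2⟩ : (Icc 0 t ∩ f ⁻¹' Iic 0).Nonempty)
  have hT0 : 0 < T := hT.1.lt_of_ne (by rintro rfl; exact (hf0.trans_le hfT).false)
  have hpos : ∀ x ∈ Ico 0 T, 0 < f x := fun x hx => by
    by_contra! hfx
    exact (hleast ⟨⟨hx.1, hx.2.le.trans hT.2⟩, hfx⟩).not_gt hx.2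
  refine ⟨T, ⟨hT0, hT.2⟩, le_antisymm hfT ?_, hpos⟩
  exact le_on_closure (fun x hx => (hpos x hx).le) continuousOn_const hf.continuousOn
    (by rw [closure_Ico hT0.ne]; exact right_mem_Icc.2 hT0.le)

theorem sdel_zero (δ : ℝ) : sdel δ 0 = 0 := by
  unfold sdel; split_ifs <;> simp

theorem cdel_zero (δ : ℝ) : cdel δ 0 = 1 := by
  unfold cdel; split_ifs <;> simp

theorem sdel_neg (δ t : ℝ) : sdel δ (-t) = -sdel δ t := by
  unfold sdel; split_ifs <;> simp [neg_div]

theorem cdel_neg (δ t : ℝ) : cdel δ (-t) = cdel δ t := by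
  unfold cdel; split_ifs <;> simp

theorem hasDerivAt_sdel (δ t : ℝ) : HasDerivAt (sdel δ) (cdel δ t) t := by
  unfold sdel cdel
  rcases lt_trichotomy δ 0 with hδ | rfl | hδ
  · have hs : Real.sqrt (-δ) ≠ 0 := (Real.sqrt_pos.2 (neg_pos.2 hδ)).ne'
    simp only [if_neg hδ.not_gt, if_neg hδ.ne]
    exact ((((hasDerivAt_id' t).const_mul _).sinh).div_const _).congr_deriv (by field_simp)
  · simpa using hasDerivAt_id' t
  · have hs : Real.sqrt δ ≠ 0 := (Real.sqrt_pos.2 hδ).ne'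
    simp only [if_pos hδ]
    exact ((((hasDerivAt_id' t).const_mul _).sin).div_const _).congr_deriv (by field_simp)

theorem hasDerivAt_cdel (δ t : ℝ) : HasDerivAt (cdel δ) (-δ * sdel δ t) t := by
  unfold sdel cdel
  rcases lt_trichotomy δ 0 with hδ | rfl | hδ
  · have hs : Real.sqrt (-δ) ≠ 0 := (Real.sqrt_pos.2 (neg_pos.2 hδ)).ne'
    have hsq : Real.sqrt (-δ) ^ 2 = -δ := Real.sq_sqrt (neg_nonneg.2 hδ.le)
    simp only [if_neg hδ.not_gt, if_neg hδ.ne]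
    exact (((hasDerivAt_id' t).const_mul _).cosh).congr_deriv (by field_simp; rw [hsq]; ring)
  · simpa using hasDerivAt_const t (1 : ℝ)
  · have hs : Real.sqrt δ ≠ 0 := (Real.sqrt_pos.2 hδ).ne'
    have hsq : Real.sqrt δ ^ 2 = δ := Real.sq_sqrt hδ.le
    simp only [if_pos hδ]
    exact (((hasDerivAt_id' t).const_mul _).cos).congr_deriv (by field_simp; rw [hsq]; ring)

/-- The solution of `u'' = -δ u`, `u 0 = 1`, `u' 0 = a`. -/
noncomputable def modelSol (δ a t : ℝ) : ℝ := cdel δ t + a * sdel δ t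

noncomputable def modelSolDeriv (δ a t : ℝ) : ℝ := a * cdel δ t - δ * sdel δ t

theorem modelSol_zero (δ a : ℝ) : modelSol δ a 0 = 1 := by
  simp [modelSol, sdel_zero, cdel_zero]

theorem modelSolDeriv_zero (δ a : ℝ) : modelSolDeriv δ a 0 = a := by
  simp [modelSolDeriv, sdel_zero, cdel_zero]

theorem modelSol_neg (δ a t : ℝ) : modelSol δ a (-t) = modelSol δ (-a) t := by
  simp only [modelSol, sdel_neg, cdel_neg]
  ring

theorem hasDerivAt_modelSol (δ a t : ℝ) :
    HasDerivAt (modelSol δ a) (modelSolDeriv δ a t) t :=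
  ((hasDerivAt_cdel δ t).add ((hasDerivAt_sdel δ t).const_mul a)).congr_deriv <| by
    simp only [modelSolDeriv]; ring

theorem hasDerivAt_modelSolDeriv (δ a t : ℝ) :
    HasDerivAt (modelSolDeriv δ a) (-δ * modelSol δ a t) t :=
  (((hasDerivAt_cdel δ t).const_mul a).sub ((hasDerivAt_sdel δ t).const_mul δ)).congr_deriv <| by
    simp only [modelSol]; ring

theorem continuous_modelSol (δ a : ℝ) : Continuous (modelSol δ a) :=
  continuous_iff_continuousAt.2 fun t => (hasDerivAt_modelSol δ a t).continuousAt

/-- If `L'' + L'^2 / m ≥ -ρ`, then `exp (L / m)` is a supersolution of `w'' = -(ρ / m) w`. -/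
theorem modelSol_rpow_le_exp {H ρ m T : ℝ} {L L' L'' : ℝ → ℝ} (hm : 0 < m) (hT : 0 ≤ T)
    (hL : ∀ x ∈ Icc 0 T, HasDerivAt L (L' x) x) (hL' : ∀ x ∈ Icc 0 T, HasDerivAt L' (L'' x) x)
    (hL0 : L 0 = 0) (hL'0 : L' 0 = H) (hriccati : ∀ x ∈ Ioo 0 T, -ρ ≤ L'' x + L' x ^ 2 / m)
    (hu : ∀ x ∈ Icc 0 T, 0 ≤ modelSol (ρ / m) (H / m) x) :
    modelSol (ρ / m) (H / m) T ^ m ≤ Real.exp (L T) := by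
  have hw : ∀ x ∈ Icc 0 T,
      HasDerivAt (fun x => Real.exp (L x / m)) (L' x / m * Real.exp (L x / m)) x :=
    fun x hx => (((hL x hx).div_const m).exp).congr_deriv (mul_comm _ _)
  have hw' : ∀ x ∈ Icc 0 T, HasDerivAt (fun x => L' x / m * Real.exp (L x / m))
      ((L'' x / m + (L' x / m) ^ 2) * Real.exp (L x / m)) x :=
    fun x hx => (((hL' x hx).div_const m).mul (hw x hx)).congr_deriv (by ring)
  have hle : modelSol (ρ / m) (H / m) T ≤ Real.exp (L T / m) := by
    refine sturm_comparison (q := fun _ => -(ρ / m)) hT (fun x _ => hasDerivAt_modelSol _ _ x)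
      (fun x _ => hasDerivAt_modelSolDeriv _ _ x) hw hw' (fun x _ => Real.exp_pos _)
      (fun x hx => hu x (Ioo_subset_Icc_self hx)) (fun x _ => le_rfl) (fun x hx => ?_)
      (by simp [modelSol_zero, hL0]) (by simp [modelSolDeriv_zero, hL0, hL'0])
    have hsuper : -(ρ / m) ≤ L'' x / m + (L' x / m) ^ 2 := by
      have := div_le_div_of_nonneg_right (hriccati x hx) hm.le
      rwa [add_div, div_div, ← sq, ← div_pow, neg_div] at this
    exact mul_le_mul_of_nonneg_right hsuper (Real.exp_pos _).le
  calc modelSol (ρ / m) (H / m) T ^ m ≤ Real.exp (L T / m) ^ m :=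
        Real.rpow_le_rpow (hu T (right_mem_Icc.2 hT)) hle hm.le
    _ = Real.exp (L T) := by rw [← Real.exp_mul, div_mul_cancel₀ _ hm.ne']

theorem modelSol_rpow_le_exp_quadratic {H ρ m T : ℝ} (hm : 0 < m) (hT : 0 ≤ T)
    (hu : ∀ x ∈ Icc 0 T, 0 ≤ modelSol (ρ / m) (H / m) x) :
    modelSol (ρ / m) (H / m) T ^ m ≤ Real.exp (H * T - ρ / 2 * T ^ 2) :=
  modelSol_rpow_le_exp (L' := fun x => H - ρ * x) (L'' := fun _ => -ρ) hm hT
    (fun x _ => (((hasDerivAt_id' x).const_mul H).sub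
      ((hasDerivAt_pow 2 x).const_mul (ρ / 2))).congr_deriv (by ring))
    (fun x _ => (((hasDerivAt_id' x).const_mul ρ).const_sub H).congr_deriv (by ring))
    (by simp) (by simp)
    (fun x _ => le_add_of_nonneg_right (div_nonneg (sq_nonneg _) hm.le)) hu

/-- For `m₁ ≤ m₂`, `L = m₂ log u_{m₂}` satisfies `L'' + L'^2 / m₂ = -ρ`, hence the Riccati
inequality with `m₁`. -/
theorem modelSol_rpow_le_rpow {H ρ m₁ m₂ T : ℝ} (hm₁ : 0 < m₁) (h12 : m₁ ≤ m₂) (hT : 0 ≤ T)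
    (hu₁ : ∀ x ∈ Icc 0 T, 0 ≤ modelSol (ρ / m₁) (H / m₁) x)
    (hu₂ : ∀ x ∈ Icc 0 T, 0 < modelSol (ρ / m₂) (H / m₂) x) :
    modelSol (ρ / m₁) (H / m₁) T ^ m₁ ≤ modelSol (ρ / m₂) (H / m₂) T ^ m₂ := by
  have hm₂ : 0 < m₂ := hm₁.trans_le h12
  set u := modelSol (ρ / m₂) (H / m₂)
  set u' := modelSolDeriv (ρ / m₂) (H / m₂)
  have hL : ∀ x ∈ Icc 0 T,
      HasDerivAt (fun x => m₂ * Real.log (u x)) (m₂ * (u' x / u x)) x :=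
    fun x hx => ((hasDerivAt_modelSol _ _ x).log (hu₂ x hx).ne').const_mul m₂
  have hL' : ∀ x ∈ Icc 0 T,
      HasDerivAt (fun x => m₂ * (u' x / u x)) (-ρ - m₂ * (u' x / u x) ^ 2) x := by
    intro x hx
    have hux := (hu₂ x hx).ne'
    exact (((hasDerivAt_modelSolDeriv _ _ x).div (hasDerivAt_modelSol _ _ x) hux).const_mul
      m₂).congr_deriv (by simp only [u, u'] at hux ⊢; field_simp)
  have hriccati : ∀ x ∈ Ioo 0 T,
      -ρ ≤ -ρ - m₂ * (u' x / u x) ^ 2 + (m₂ * (u' x / u x)) ^ 2 / m₁ := by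
    intro x _
    have : m₂ * (u' x / u x) ^ 2 ≤ (m₂ * (u' x / u x)) ^ 2 / m₁ := by
      rw [le_div_iff₀ hm₁]
      nlinarith [mul_nonneg (mul_nonneg hm₂.le (sq_nonneg (u' x / u x))) (sub_nonneg.2 h12)]
    linarith
  have key := modelSol_rpow_le_exp hm₁ hT hL hL' (by simp [u, modelSol_zero])
    (by simp [u, u', modelSol_zero, modelSolDeriv_zero]; field_simp) hriccati hu₁
  rwa [Real.rpow_def_of_pos (hu₂ T (right_mem_Icc.2 hT)), mul_comm]

theorem modelSol_pos_of_le {H ρ m₁ m₂ t : ℝ} (hm₁ : 0 < m₁) (h12 : m₁ ≤ m₂)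
    (hu₁ : ∀ x ∈ Icc 0 t, 0 < modelSol (ρ / m₁) (H / m₁) x) :
    ∀ x ∈ Icc 0 t, 0 < modelSol (ρ / m₂) (H / m₂) x := by
  have hm₂ : 0 < m₂ := hm₁.trans_le h12
  by_contra h
  obtain ⟨T, hT, hT0, hpos⟩ :=
    exists_first_zero (continuous_modelSol _ _) (by simp [modelSol_zero]) h
  have hTt : Icc 0 T ⊆ Icc 0 t := Icc_subset_Icc_right hT.2
  have hcomp : ∀ s ∈ Ico 0 T,
      modelSol (ρ / m₁) (H / m₁) s ^ m₁ ≤ modelSol (ρ / m₂) (H / m₂) s ^ m₂ := fun s hs =>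
    modelSol_rpow_le_rpow hm₁ h12 hs.1
      (fun x hx => (hu₁ x (hTt (Icc_subset_Icc_right hs.2.le hx))).le)
      (fun x hx => hpos x ⟨hx.1, hx.2.trans_lt hs.2⟩)
  have hcont : ∀ m, 0 < m → Continuous fun s => modelSol (ρ / m) (H / m) s ^ m :=
    fun m hm => (continuous_modelSol _ _).rpow_const fun _ => Or.inr hm.le
  have hT_le : modelSol (ρ / m₁) (H / m₁) T ^ m₁ ≤ modelSol (ρ / m₂) (H / m₂) T ^ m₂ :=
    le_on_closure hcomp (hcont m₁ hm₁).continuousOn (hcont m₂ hm₂).continuousOn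
      (by rw [closure_Ico hT.1.ne]; exact right_mem_Icc.2 hT.1.le)
  rw [hT0, Real.zero_rpow hm₂.ne'] at hT_le
  exact hT_le.not_gt (Real.rpow_pos_of_pos (hu₁ T (hTt (right_mem_Icc.2 hT.1.le))) m₁)

theorem truncPos_neg (f : ℝ → ℝ) (t : ℝ) :
    truncPos f (-t) = truncPos (fun s => f (-s)) t := by
  have hmem : ∀ s, s ∈ Ioo (min (-t) 0) (max (-t) 0) ↔ -s ∈ Ioo (min t 0) (max t 0) := by
    intro s
    simp only [mem_Ioo, min_def, max_def]
    split_ifs <;> constructor <;> rintro ⟨h₁, h₂⟩ <;> constructor <;> linarith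
  unfold truncPos
  rw [(Equiv.neg ℝ).exists_congr_left]
  simp [hmem]

theorem truncPos_eq_ite {f : ℝ → ℝ} {t : ℝ} (hf : Continuous f) (hf0 : 0 < f 0) (ht : 0 ≤ t) :
    truncPos f t = if ∀ x ∈ Icc 0 t, 0 < f x then f t else 0 := by
  rw [truncPos, min_eq_right ht, max_eq_left ht]
  by_cases hpos : ∀ x ∈ Icc 0 t, 0 < f x
  · rw [if_pos hpos, if_neg]
    rintro ⟨s, hs, hfs⟩
    exact (hpos s (Ioo_subset_Icc_self hs)).ne' hfs
  · rw [if_neg hpos]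
    obtain ⟨T, hT, hT0, -⟩ := exists_first_zero hf hf0 hpos
    rcases hT.2.lt_or_eq with hTt | rfl
    · exact if_pos ⟨T, ⟨hT.1, hTt⟩, hT0⟩
    · split_ifs
      · rfl
      · exact hT0

theorem Jfun_neg (H ρ m t : ℝ) : Jfun H ρ m (-t) = Jfun (-H) ρ m t := by
  show truncPos (modelSol (ρ / m) (H / m)) (-t) ^ m = truncPos (modelSol (ρ / m) (-H / m)) t ^ m
  simp only [truncPos_neg, modelSol_neg, neg_div]

theorem Jfun_eq_ite {H ρ m t : ℝ} (hm : 0 < m) (ht : 0 ≤ t) :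
    Jfun H ρ m t = if ∀ x ∈ Icc 0 t, 0 < modelSol (ρ / m) (H / m) x
      then modelSol (ρ / m) (H / m) t ^ m else 0 := by
  show truncPos (modelSol (ρ / m) (H / m)) t ^ m = _
  rw [truncPos_eq_ite (continuous_modelSol _ _) (by simp [modelSol_zero]) ht]
  split_ifs
  · rfl
  · exact Real.zero_rpow hm.ne'

theorem Jfun_le_Jfun_and_le_exp_of_nonneg {H ρ m₁ m₂ t : ℝ} (hm₁ : 0 < m₁) (h12 : m₁ ≤ m₂)
    (ht : 0 ≤ t) :
    Jfun H ρ m₁ t ≤ Jfun H ρ m₂ t ∧ Jfun H ρ m₂ t ≤ Real.exp (H * t - ρ / 2 * t ^ 2) := by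
  have hm₂ : 0 < m₂ := hm₁.trans_le h12
  rw [Jfun_eq_ite hm₁ ht, Jfun_eq_ite hm₂ ht]
  constructor
  · split_ifs with hu₁ hu₂ hu₂
    · exact modelSol_rpow_le_rpow hm₁ h12 ht (fun x hx => (hu₁ x hx).le) hu₂
    · exact absurd (modelSol_pos_of_le hm₁ h12 hu₁) hu₂
    · exact Real.rpow_nonneg (hu₂ t (right_mem_Icc.2 ht)).le _
    · exact le_rfl
  · split_ifs with hu₂
    · exact modelSol_rpow_le_exp_quadratic hm₂ ht fun x hx => (hu₂ x hx).le
    · exact (Real.exp_pos _).le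

/-- `m ↦ J_{H,ρ,m}` is pointwise nondecreasing in `m ∈ (0,∞]`, where
`J_{H,ρ,∞}(t) = exp(Ht − (ρ/2)t²)`. -/
theorem stmt2 (H ρ m₁ m₂ : ℝ) (hm₁ : 0 < m₁) (h12 : m₁ ≤ m₂) (t : ℝ) :
    Jfun H ρ m₁ t ≤ Jfun H ρ m₂ t ∧
    Jfun H ρ m₂ t ≤ Real.exp (H * t - ρ / 2 * t ^ 2) := by
  rcases le_total 0 t with ht | ht
  · exact Jfun_le_Jfun_and_le_exp_of_nonneg hm₁ h12 ht
  · have h := Jfun_le_Jfun_and_le_exp_of_nonneg (H := -H) (ρ := ρ) hm₁ h12 (neg_nonneg.2 ht)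
    rwa [← Jfun_neg, ← Jfun_neg, neg_neg, neg_mul_neg, neg_sq] at h
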